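/- Expected value decomposition against a comparator policy: Fix policies π* and π, functions Q_h : S × A → ℝ for h ∈ [H], define V_h(x) = Σ_{a} π_h(a|x)·Q_h(x,a) for h ∈ [H] and V_{H+1} ≡ 0, and the model prediction error ι_h = r_h + P_h V_{h+1} − Q_h. Then for any initial state x₁ ∈ S, V^{π*}_1(x₁) − V_1(x₁) = Σ_{h=1}^{H} Σ_{x∈S} Σ_{a∈A} μ^{π*}_h(x)·π*_h(a|x)·ι_h(x,a) + Σ_{h=1}^{H} Σ_{x∈S} μ^{π*}_h(x)·Σ_{a∈A} Q_h(x,a)·(π*_h(a|x) − π_h(a|x)). -/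

import Mathlib

/-!
Write `D h = ∑ₓ μ^{π*}_h(x) (V^{π*}_h(x) - V_h(x))`. Expanding `V^{π*}_h` by its Bellman equation
and `V_h` by its definition splits `V^{π*}_h(x) - V_h(x)` into the prediction error at `x`, the
policy mismatch at `x`, and the expected gap `P_h (V^{π*}_{h+1} - V_{h+1})` one step later.
Averaging over `μ^{π*}_h` carries the last term to `D (h+1)`, so `D h - D (h+1)` is the `h`-th summand
of the right-hand side. The sum telescopes from `D 1 = V^{π*}_1(x₁) - V_1(x₁)` to `D (H+1) = 0`.
-/

open Finset

variable {S A : Type*}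

/-- Value function computed with `n` remaining recursion steps, at step `h`. -/
noncomputable def Vrem [Fintype S] [Fintype A] (P : ℕ → S → A → S → ℝ)
    (r : ℕ → S → A → ℝ) (po : ℕ → S → A → ℝ) : ℕ → ℕ → S → ℝ
  | 0, _, _ => 0
  | (n+1), h, x => ∑ a, po h x a * (r h x a + ∑ x', P h x a x' * Vrem P r po n (h+1) x')

/-- Value function `V^π_h` of policy `po` in the episodic MDP with horizon `H`. -/
noncomputable def Vval [Fintype S] [Fintype A] (H : ℕ) (P : ℕ → S → A → S → ℝ)
    (r : ℕ → S → A → ℝ) (po : ℕ → S → A → ℝ) (h : ℕ) (x : S) : ℝ :=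
  Vrem P r po (H + 1 - h) h x

/-- Distribution `μ^π_h` of the state at step `h` under policy `po` started from `x₁`. -/
noncomputable def stateDist [Fintype S] [Fintype A] [DecidableEq S]
    (P : ℕ → S → A → S → ℝ) (po : ℕ → S → A → ℝ) (x₁ : S) : ℕ → S → ℝ
  | 0 => fun x => if x = x₁ then 1 else 0
  | 1 => fun x => if x = x₁ then 1 else 0
  | (h+2) => fun x' => ∑ x, ∑ a, stateDist P po x₁ (h+1) x * po (h+1) x a * P (h+1) x a x'

section Value

variable [Fintype S] [Fintype A] {H : ℕ} (P : ℕ → S → A → S → ℝ) (r : ℕ → S → A → ℝ)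
  (po : ℕ → S → A → ℝ)

lemma Vval_eq_bellman {h : ℕ} (hh : h ≤ H) (x : S) :
    Vval H P r po h x
      = ∑ a, po h x a * (r h x a + ∑ x', P h x a x' * Vval H P r po (h+1) x') := by
  unfold Vval
  rw [show H + 1 - h = (H - h) + 1 by omega, show H + 1 - (h + 1) = H - h by omega, Vrem]

lemma Vval_horizon_succ (x : S) : Vval H P r po (H+1) x = 0 := by
  rw [Vval, Nat.sub_self, Vrem]

end Value

section StateDist

variable [Fintype S] [Fintype A] [DecidableEq S] (P : ℕ → S → A → S → ℝ) (po : ℕ → S → A → ℝ)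
  (x₁ : S)

lemma sum_stateDist_one_mul (f : S → ℝ) : ∑ x, stateDist P po x₁ 1 x * f x = f x₁ := by
  simp [stateDist, ite_mul]

lemma stateDist_succ {h : ℕ} (hh : 1 ≤ h) (x' : S) :
    stateDist P po x₁ (h+1) x' = ∑ x, ∑ a, stateDist P po x₁ h x * po h x a * P h x a x' := by
  obtain ⟨m, rfl⟩ := Nat.exists_eq_add_of_le' hh
  rfl

lemma sum_stateDist_succ_mul {h : ℕ} (hh : 1 ≤ h) (f : S → ℝ) :
    ∑ x', stateDist P po x₁ (h+1) x' * f x'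
      = ∑ x, stateDist P po x₁ h x * ∑ a, po h x a * ∑ x', P h x a x' * f x' := by
  simp only [stateDist_succ P po x₁ hh, sum_mul, mul_sum]
  rw [sum_comm]
  refine sum_congr rfl fun x _ => ?_
  rw [sum_comm]
  refine sum_congr rfl fun a _ => sum_congr rfl fun x' _ => ?_
  ring

end StateDist

section Decomposition

variable [Fintype S] [Fintype A] [DecidableEq S] (H : ℕ) (P : ℕ → S → A → S → ℝ)
  (r : ℕ → S → A → ℝ) (po pistar Q : ℕ → S → A → ℝ) (V : ℕ → S → ℝ) (x₁ : S)

noncomputable def expectedValueGap (h : ℕ) : ℝ :=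
  ∑ x, stateDist P pistar x₁ h x * (Vval H P r pistar h x - V h x)

lemma expectedValueGap_sub_succ {h : ℕ} (hh1 : 1 ≤ h) (hhH : h ≤ H)
    (hV : ∀ x, V h x = ∑ a, po h x a * Q h x a) :
    expectedValueGap H P r pistar V x₁ h - expectedValueGap H P r pistar V x₁ (h+1)
      = (∑ x, ∑ a, stateDist P pistar x₁ h x * pistar h x a *
          (r h x a + (∑ x', P h x a x' * V (h+1) x') - Q h x a))
        + ∑ x, stateDist P pistar x₁ h x * ∑ a, Q h x a * (pistar h x a - po h x a) := by
  have hgap : ∀ x, Vval H P r pistar h x - V h x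
      = (∑ a, pistar h x a * (r h x a + (∑ x', P h x a x' * V (h+1) x') - Q h x a))
        + (∑ a, Q h x a * (pistar h x a - po h x a))
        + ∑ a, pistar h x a * ∑ x', P h x a x' * (Vval H P r pistar (h+1) x' - V (h+1) x') := by
    intro x
    rw [Vval_eq_bellman P r pistar hhH, hV, ← sum_sub_distrib, ← sum_add_distrib,
      ← sum_add_distrib]
    refine sum_congr rfl fun a _ => ?_
    simp only [mul_sub, sum_sub_distrib]
    ring
  simp only [expectedValueGap, hgap, mul_add, sum_add_distrib,
    sum_stateDist_succ_mul P pistar x₁ hh1, add_sub_cancel_right, mul_sum, mul_assoc]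

end Decomposition

theorem expected_value_decomposition_general [Fintype S] [Fintype A] [DecidableEq S]
    (H : ℕ)
    (P : ℕ → S → A → S → ℝ)
    (r : ℕ → S → A → ℝ)
    (po pistar : ℕ → S → A → ℝ)
    (Q : ℕ → S → A → ℝ) (V : ℕ → S → ℝ)
    (hV : ∀ h ∈ Finset.Icc 1 H, ∀ x, V h x = ∑ a, po h x a * Q h x a)
    (hVend : ∀ x, V (H+1) x = 0)
    (x₁ : S) :
    Vval H P r pistar 1 x₁ - V 1 x₁ =
      (∑ h ∈ Finset.Icc 1 H, ∑ x, ∑ a,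
        stateDist P pistar x₁ h x * pistar h x a *
          (r h x a + (∑ x', P h x a x' * V (h+1) x') - Q h x a))
      + ∑ h ∈ Finset.Icc 1 H, ∑ x, stateDist P pistar x₁ h x *
          ∑ a, Q h x a * (pistar h x a - po h x a) := by
  set D := expectedValueGap H P r pistar V x₁
  have hD1 : D 1 = Vval H P r pistar 1 x₁ - V 1 x₁ := sum_stateDist_one_mul P pistar x₁ _
  have hDend : D (H+1) = 0 := by simp [D, expectedValueGap, Vval_horizon_succ, hVend]
  have htelescope : ∑ h ∈ Icc 1 H, (D h - D (h+1)) = D 1 := by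
    rw [← Ico_add_one_right_eq_Icc, ← neg_inj, ← sum_neg_distrib]
    simp only [neg_sub]
    rw [sum_Ico_sub D (by omega), hDend, zero_sub]
  rw [← hD1, ← htelescope, ← sum_add_distrib]
  refine sum_congr rfl fun h hh => ?_
  obtain ⟨hh1, hhH⟩ := mem_Icc.mp hh
  exact expectedValueGap_sub_succ H P r po pistar Q V x₁ hh1 hhH (hV h hh)

/-- Expected value decomposition against a comparator policy. -/
theorem expected_value_decomposition [Fintype S] [Fintype A] [Nonempty A] [DecidableEq S]
    (H : ℕ) (hH : 1 ≤ H)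
    (P : ℕ → S → A → S → ℝ)
    (hP0 : ∀ h ∈ Finset.Icc 1 H, ∀ x a x', 0 ≤ P h x a x')
    (hP1 : ∀ h ∈ Finset.Icc 1 H, ∀ x a, ∑ x', P h x a x' = 1)
    (r : ℕ → S → A → ℝ)
    (hr : ∀ h ∈ Finset.Icc 1 H, ∀ x a, 0 ≤ r h x a ∧ r h x a ≤ 1)
    (po pistar : ℕ → S → A → ℝ)
    (hpo0 : ∀ h ∈ Finset.Icc 1 H, ∀ x a, 0 ≤ po h x a)
    (hpo1 : ∀ h ∈ Finset.Icc 1 H, ∀ x, ∑ a, po h x a = 1)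
    (hpistar0 : ∀ h ∈ Finset.Icc 1 H, ∀ x a, 0 ≤ pistar h x a)
    (hpistar1 : ∀ h ∈ Finset.Icc 1 H, ∀ x, ∑ a, pistar h x a = 1)
    (Q : ℕ → S → A → ℝ) (V : ℕ → S → ℝ)
    (hV : ∀ h ∈ Finset.Icc 1 H, ∀ x, V h x = ∑ a, po h x a * Q h x a)
    (hVend : ∀ x, V (H+1) x = 0)
    (x₁ : S) :
    Vval H P r pistar 1 x₁ - V 1 x₁ =
      (∑ h ∈ Finset.Icc 1 H, ∑ x, ∑ a,
        stateDist P pistar x₁ h x * pistar h x a *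
          (r h x a + (∑ x', P h x a x' * V (h+1) x') - Q h x a))
      + ∑ h ∈ Finset.Icc 1 H, ∑ x, stateDist P pistar x₁ h x *
          ∑ a, Q h x a * (pistar h x a - po h x a) :=
  expected_value_decomposition_general H P r po pistar Q V hV hVend x₁
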